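/- Let n be a non-negative integer, d = 2^n, and b = (b_1; b_2), c = (c_1; c_2) ∈ ℝ^{2d}. Define X(m, β, γ) = {k ∈ ℤ^{2^m} : β ≤ A_m k ≤ γ componentwise}. Then X(n+1, b, c) equals the set of vectors (k_1; k_2) ∈ ℤ^{2d} such that k_1 ∈ X(n, (b_1 + b_2)/2, (c_1 + c_2)/2) and k_2 ∈ X(n, D_n^{-1} max(b_1 − A_n k_1, −c_2 + A_n k_1), D_n^{-1} min(c_1 − A_n k_1, −b_2 + A_n k_1)), where max and min are componentwise. -/

import Mathlib

/-!
Write `k = (k₁; k₂)`, `u = A_n k₁` and `v = D_n A_n k₂`. The block form of `A_{n+1}` gives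
`A_{n+1} k = (u + v; u - v)`, and the four bounds `b₁ ≤ u + v ≤ c₁`, `b₂ ≤ u - v ≤ c₂` are
equivalent to `max(b₁ - u, u - c₂) ≤ v ≤ min(c₁ - u, u - b₂)`, which already forces
`(b₁ + b₂)/2 ≤ u ≤ (c₁ + c₂)/2`. The diagonal entries of `D_n` are `2 cos θ` with
`θ ∈ (0, π/2)`, hence positive, so `D_n⁻¹` may be moved across these inequalities.
-/

/-- σ(n,k) from the paper: σ(0,1)=1 and, with d = 2^n, σ(n+1,k)=σ(n,k) for 1 ≤ k ≤ d,
σ(n+1,k)=2d+1−σ(n,k−d) for d+1 ≤ k ≤ 2d. -/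
def sigmaCF : ℕ → ℕ → ℤ
  | 0, _ => 1
  | n + 1, k => if k ≤ 2 ^ n then sigmaCF n k else 2 * 2 ^ n + 1 - sigmaCF n (k - 2 ^ n)

/-- ξ_{n,k} = 2 cos(π(2σ(n,k) − 1)/2^{n+1}). -/
noncomputable def xiCF (n k : ℕ) : ℝ :=
  2 * Real.cos (Real.pi * (2 * (sigmaCF n k : ℝ) - 1) / 2 ^ (n + 1))

/-- D_n = diag(ξ_{n+1,1}, …, ξ_{n+1,2^n}). -/
noncomputable def DCF (n : ℕ) : Matrix (Fin (2 ^ n)) (Fin (2 ^ n)) ℝ :=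
  Matrix.diagonal fun i => xiCF (n + 1) (i.val + 1)

/-- A_0 = (1), A_{n+1} = [[A_n, D_n A_n], [A_n, −D_n A_n]]. -/
noncomputable def ACF : (n : ℕ) → Matrix (Fin (2 ^ n)) (Fin (2 ^ n)) ℝ
  | 0 => 1
  | n + 1 =>
    Matrix.reindex (finSumFinEquiv.trans (finCongr (by rw [pow_succ, mul_two])))
      (finSumFinEquiv.trans (finCongr (by rw [pow_succ, mul_two])))
      (Matrix.fromBlocks (ACF n) (DCF n * ACF n) (ACF n) (-(DCF n * ACF n)))

/-- Vertical concatenation (x; y) of two vectors of length 2^n. -/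
def vcat {α : Type*} {n : ℕ} (x y : Fin (2 ^ n) → α) : Fin (2 ^ (n + 1)) → α :=
  fun i => Fin.append x y (finCongr (by rw [pow_succ, mul_two]) i)

/-- X(m, β, γ) = {k ∈ ℤ^{2^m} : β ≤ A_m k ≤ γ componentwise}. -/
def XCF (m : ℕ) (β γ : Fin (2 ^ m) → ℝ) : Set (Fin (2 ^ m) → ℤ) :=
  {k | β ≤ (ACF m).mulVec (fun j => (k j : ℝ)) ∧ (ACF m).mulVec (fun j => (k j : ℝ)) ≤ γ}

open Matrix

lemma Matrix.inv_diagonal_of_ne_zero {ι K : Type*} [Fintype ι] [DecidableEq ι] [Field K]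
    {d : ι → K} (hd : ∀ i, d i ≠ 0) : (diagonal d)⁻¹ = diagonal d⁻¹ :=
  inv_eq_left_inv <| by
    rw [diagonal_mul_diagonal, ← diagonal_one]
    exact congrArg diagonal (funext fun i => inv_mul_cancel₀ (hd i))

lemma Matrix.inv_diagonal_mulVec_le_iff {ι K : Type*} [Fintype ι] [DecidableEq ι] [Field K]
    [LinearOrder K] [IsStrictOrderedRing K] {d : ι → K} (hd : ∀ i, 0 < d i) (x y : ι → K) :
    (diagonal d)⁻¹ *ᵥ x ≤ y ↔ x ≤ diagonal d *ᵥ y := by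
  simp only [Pi.le_def, inv_diagonal_of_ne_zero fun i => (hd i).ne', mulVec_diagonal,
    Pi.inv_apply, inv_mul_le_iff₀ (hd _)]

lemma Matrix.le_inv_diagonal_mulVec_iff {ι K : Type*} [Fintype ι] [DecidableEq ι] [Field K]
    [LinearOrder K] [IsStrictOrderedRing K] {d : ι → K} (hd : ∀ i, 0 < d i) (x y : ι → K) :
    y ≤ (diagonal d)⁻¹ *ᵥ x ↔ diagonal d *ᵥ y ≤ x := by
  simp only [Pi.le_def, inv_diagonal_of_ne_zero fun i => (hd i).ne', mulVec_diagonal,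
    Pi.inv_apply, le_inv_mul_iff₀ (hd _)]

lemma add_sub_bounds_iff {K : Type*} [Field K] [LinearOrder K] [IsStrictOrderedRing K]
    {b₁ b₂ c₁ c₂ u v : K} :
    ((b₁ ≤ u + v ∧ b₂ ≤ u - v) ∧ u + v ≤ c₁ ∧ u - v ≤ c₂) ↔
      (b₁ + b₂) / 2 ≤ u ∧ u ≤ (c₁ + c₂) / 2 ∧
        max (b₁ - u) (-c₂ + u) ≤ v ∧ v ≤ min (c₁ - u) (-b₂ + u) := by
  simp only [max_le_iff, le_min_iff]
  constructor
  · rintro ⟨⟨hb₁, hb₂⟩, hc₁, hc₂⟩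
    refine ⟨?_, ?_, ⟨?_, ?_⟩, ?_, ?_⟩ <;> linarith
  · rintro ⟨-, -, ⟨hb₁, hc₂⟩, hc₁, hb₂⟩
    refine ⟨⟨?_, ?_⟩, ?_, ?_⟩ <;> linarith

lemma sigmaCF_mem_Icc (n k : ℕ) : sigmaCF n k ∈ Set.Icc 1 (2 ^ n) := by
  induction n generalizing k with
  | zero => simp [sigmaCF]
  | succ n ih =>
    rw [sigmaCF]
    split_ifs
    · obtain ⟨h₁, h₂⟩ := ih k
      constructor <;> grind
    · obtain ⟨h₁, h₂⟩ := ih (k - 2 ^ n)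
      constructor <;> grind

lemma xiCF_succ_pos {n k : ℕ} (hk : k ≤ 2 ^ n) : 0 < xiCF (n + 1) k := by
  have hσ : sigmaCF (n + 1) k = sigmaCF n k := if_pos hk
  obtain ⟨h₁, h₂⟩ := sigmaCF_mem_Icc n k
  have h₁' : (1 : ℝ) ≤ sigmaCF n k := mod_cast h₁
  have h₂' : (sigmaCF n k : ℝ) ≤ 2 ^ n := mod_cast h₂
  rw [xiCF, hσ]
  refine mul_pos two_pos (Real.cos_pos_of_mem_Ioo ⟨?_, ?_⟩)
  · have : 0 < Real.pi * (2 * (sigmaCF n k : ℝ) - 1) / 2 ^ (n + 1 + 1) :=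
      div_pos (mul_pos Real.pi_pos (by linarith)) (by positivity)
    linarith [Real.pi_pos]
  · rw [div_lt_iff₀ (by positivity)]
    have : (2 : ℝ) ^ (n + 1 + 1) = 4 * 2 ^ n := by ring
    nlinarith [Real.pi_pos]

def finPowSuccEquiv (n : ℕ) : Fin (2 ^ n) ⊕ Fin (2 ^ n) ≃ Fin (2 ^ (n + 1)) :=
  finSumFinEquiv.trans (finCongr (by rw [pow_succ, mul_two]))

section vcat

variable {α : Type*} {n : ℕ}

lemma vcat_comp_finPowSuccEquiv (x y : Fin (2 ^ n) → α) :
    vcat x y ∘ finPowSuccEquiv n = Sum.elim x y := by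
  ext (i | i) <;>
    simp only [vcat, finPowSuccEquiv, Function.comp_apply, Equiv.trans_apply, finCongr_apply,
      finSumFinEquiv_apply_left, finSumFinEquiv_apply_right, Fin.cast_cast, Fin.cast_eq_self,
      Sum.elim_inl, Sum.elim_inr, Fin.append_left, Fin.append_right]

lemma comp_finPowSuccEquiv_injective :
    Function.Injective fun k : Fin (2 ^ (n + 1)) → α => k ∘ finPowSuccEquiv n :=
  (finPowSuccEquiv n).surjective.injective_comp_right

lemma exists_vcat_eq (k : Fin (2 ^ (n + 1)) → α) : ∃ x y, vcat x y = k :=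
  ⟨k ∘ finPowSuccEquiv n ∘ Sum.inl, k ∘ finPowSuccEquiv n ∘ Sum.inr,
    comp_finPowSuccEquiv_injective <|
      (vcat_comp_finPowSuccEquiv _ _).trans (Sum.elim_comp_inl_inr (k ∘ finPowSuccEquiv n))⟩

lemma vcat_inj {x y x' y' : Fin (2 ^ n) → α} : vcat x y = vcat x' y' ↔ x = x' ∧ y = y' := by
  refine ⟨fun h => ?_, fun ⟨hx, hy⟩ => hx ▸ hy ▸ rfl⟩
  have h' := congrArg (· ∘ finPowSuccEquiv n) h
  simp only [vcat_comp_finPowSuccEquiv] at h'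
  exact ⟨congrArg (· ∘ Sum.inl) h', congrArg (· ∘ Sum.inr) h'⟩

lemma comp_vcat {β : Type*} (f : α → β) (x y : Fin (2 ^ n) → α) :
    f ∘ vcat x y = vcat (f ∘ x) (f ∘ y) :=
  comp_finPowSuccEquiv_injective <| by
    change (f ∘ vcat x y) ∘ _ = vcat _ _ ∘ _
    rw [Function.comp_assoc, vcat_comp_finPowSuccEquiv, vcat_comp_finPowSuccEquiv, Sum.comp_elim]

lemma vcat_le_vcat_iff [LE α] {x y x' y' : Fin (2 ^ n) → α} :
    vcat x y ≤ vcat x' y' ↔ x ≤ x' ∧ y ≤ y' := by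
  rw [← Sum.elim_le_elim_iff, ← vcat_comp_finPowSuccEquiv, ← vcat_comp_finPowSuccEquiv]
  exact (finPowSuccEquiv n).surjective.forall

end vcat

lemma ACF_succ_mulVec (n : ℕ) (x y : Fin (2 ^ n) → ℝ) :
    ACF (n + 1) *ᵥ vcat x y =
      vcat (ACF n *ᵥ x + DCF n *ᵥ ACF n *ᵥ y) (ACF n *ᵥ x - DCF n *ᵥ ACF n *ᵥ y) := by
  apply comp_finPowSuccEquiv_injective
  change (reindex (finPowSuccEquiv n) (finPowSuccEquiv n)
    (fromBlocks (ACF n) (DCF n * ACF n) (ACF n) (-(DCF n * ACF n))) *ᵥ vcat x y) ∘ _ = vcat _ _ ∘ _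
  rw [reindex_apply, submatrix_mulVec_equiv, Equiv.symm_symm, Function.comp_assoc,
    Equiv.symm_comp_self, Function.comp_id, vcat_comp_finPowSuccEquiv, vcat_comp_finPowSuccEquiv,
    fromBlocks_mulVec]
  simp only [Sum.elim_comp_inl, Sum.elim_comp_inr, neg_mulVec, mulVec_mulVec, sub_eq_add_neg]

/-- `X(n+1, (b₁;b₂), (c₁;c₂))` is the set of vectors `(k₁; k₂)` with
`k₁ ∈ X(n, (b₁+b₂)/2, (c₁+c₂)/2)` and
`k₂ ∈ X(n, D_n⁻¹ max(b₁ − A_n k₁, −c₂ + A_n k₁), D_n⁻¹ min(c₁ − A_n k₁, −b₂ + A_n k₁))`. -/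
theorem XCF_succ (n : ℕ) (b₁ b₂ c₁ c₂ : Fin (2 ^ n) → ℝ) :
    XCF (n + 1) (vcat b₁ b₂) (vcat c₁ c₂) =
      {k | ∃ k₁ k₂ : Fin (2 ^ n) → ℤ, k = vcat k₁ k₂ ∧
        k₁ ∈ XCF n (fun i => (b₁ i + b₂ i) / 2) (fun i => (c₁ i + c₂ i) / 2) ∧
        k₂ ∈ XCF n
          ((DCF n)⁻¹.mulVec fun i =>
            max (b₁ i - (ACF n).mulVec (fun j => (k₁ j : ℝ)) i)
              (-c₂ i + (ACF n).mulVec (fun j => (k₁ j : ℝ)) i))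
          ((DCF n)⁻¹.mulVec fun i =>
            min (c₁ i - (ACF n).mulVec (fun j => (k₁ j : ℝ)) i)
              (-b₂ i + (ACF n).mulVec (fun j => (k₁ j : ℝ)) i))} := by
  have hξ (i : Fin (2 ^ n)) : 0 < xiCF (n + 1) (i.val + 1) := xiCF_succ_pos i.isLt
  ext k
  obtain ⟨k₁, k₂, rfl⟩ := exists_vcat_eq k
  have hcast := comp_vcat (Int.cast : ℤ → ℝ) k₁ k₂
  simp only [XCF, Set.mem_ofPred_eq, vcat_inj, and_assoc, exists_and_left, exists_eq_left',
    Function.comp_def] at hcast ⊢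
  rw [hcast, ACF_succ_mulVec, vcat_le_vcat_iff, vcat_le_vcat_iff, DCF,
    inv_diagonal_mulVec_le_iff hξ, le_inv_diagonal_mulVec_iff hξ]
  simp only [Pi.le_def, ← forall_and]
  exact forall_congr' fun i => add_sub_bounds_iff
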